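/- Suppose G is connected and M is nonempty. If a state ψ is stationary under the SKW operator U' (U'ψ = ψ), then for every unmarked vertex a ∉ M, the amplitudes at a sum to zero: ∑_{b adjacent to a} ψ(a,b) = 0 (equivalently, the uniform component of ψ at every unmarked vertex vanishes). -/
import Mathlib


open Finset

variable {V : Type*} [Fintype V] [DecidableEq V]

/-- The average of the amplitudes of the state `ψ` at vertex `a`:
`avg_ψ(a) = (1/deg a) * ∑_{b ~ a} ψ(a,b)`. -/
noncomputable def avgQ (G : SimpleGraph V) [DecidableRel G.Adj] (ψ : V → V → ℂ) (a : V) : ℂ :=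
  (G.degree a : ℂ)⁻¹ * ∑ b ∈ G.neighborFinset a, ψ a b

/-- The SKW coin `C'`: applies `-I` at marked vertices and the Grover coin elsewhere. -/
noncomputable def CopSKW (G : SimpleGraph V) [DecidableRel G.Adj] (M : Finset V)
    (ψ : V → V → ℂ) : V → V → ℂ :=
  fun a b => if a ∈ M then -ψ a b else 2 * avgQ G ψ a - ψ a b

/-- The flip-flop shift `S`. -/
def Sop (ψ : V → V → ℂ) : V → V → ℂ :=
  fun a b => ψ b a

/-- The SKW search operator `U' = S ∘ C'`. -/
noncomputable def UopSKW (G : SimpleGraph V) [DecidableRel G.Adj] (M : Finset V)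
    (ψ : V → V → ℂ) : V → V → ℂ :=
  Sop (CopSKW G M ψ)

/-- A state is stationary under the SKW operator `U'` if `U'ψ = ψ` on every dart of `G`. -/
def StationarySKW (G : SimpleGraph V) [DecidableRel G.Adj] (M : Finset V)
    (ψ : V → V → ℂ) : Prop :=
  ∀ a b, G.Adj a b → UopSKW G M ψ a b = ψ a b

/-- For a connected graph with a nonempty marked set, any state stationary under the SKW
operator has vanishing uniform component at every unmarked vertex. -/
theorem skw_stationary_unmarked_sum_zero (G : SimpleGraph V) [DecidableRel G.Adj]
    (M : Finset V) (hdeg : ∀ v, 0 < G.degree v) (hconn : G.Connected) (hM : M.Nonempty)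
    (ψ : V → V → ℂ) (hstat : StationarySKW G M ψ) :
    ∀ a, a ∉ M → ∑ b ∈ G.neighborFinset a, ψ a b = 0 := by
  classical
  have hdegC : ∀ v, (G.degree v : ℂ) ≠ 0 := fun v =>
    Nat.cast_ne_zero.mpr (hdeg v).ne'
  -- basic consequences of stationarity
  have h1 : ∀ a b, G.Adj a b → a ∉ M → ψ a b + ψ b a = 2 * avgQ G ψ a := by
    intro a b hab haM
    have h := hstat b a hab.symm
    simp only [UopSKW, Sop, CopSKW, if_neg haM] at h
    linear_combination -h
  have h2 : ∀ a b, G.Adj a b → a ∉ M → b ∈ M → avgQ G ψ a = 0 := by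
    intro a b hab haM hbM
    have h := hstat a b hab
    simp only [UopSKW, Sop, CopSKW, if_pos hbM] at h
    have h' := h1 a b hab haM
    have : ψ a b + ψ b a = 0 := by linear_combination -h
    rw [this] at h'
    linear_combination -h' / 2
  set g : V → ℂ := fun v => if v ∈ M then 0 else avgQ G ψ v with hg
  have hgM : ∀ a ∈ M, g a = 0 := fun a ha => by simp [hg, ha]
  have hedge : ∀ a b, G.Adj a b → a ∉ M → ψ a b + ψ b a = g a + g b := by
    intro a b hab haM
    by_cases hbM : b ∈ M
    · have h := hstat a b hab
      simp only [UopSKW, Sop, CopSKW, if_pos hbM] at h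
      have hga : g a = 0 := by simp [hg, haM, h2 a b hab haM hbM]
      rw [hga, hgM b hbM]
      linear_combination -h
    · have ha := h1 a b hab haM
      have hb := h1 b a hab.symm hbM
      simp only [hg, if_neg haM, if_neg hbM]
      have : ψ b a + ψ a b = ψ a b + ψ b a := by ring
      rw [this] at hb
      linear_combination (ha + hb) / 2
  have hharm : ∀ a, a ∉ M → (G.degree a : ℂ) * g a = ∑ b ∈ G.neighborFinset a, g b := by
    intro a haM
    have hsum1 : ∑ b ∈ G.neighborFinset a, (ψ a b + ψ b a)
        = ∑ b ∈ G.neighborFinset a, (g a + g b) := by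
      refine Finset.sum_congr rfl fun b hb => ?_
      exact hedge a b (G.mem_neighborFinset a b |>.mp hb) haM
    have hsum2 : ∑ b ∈ G.neighborFinset a, (ψ a b + ψ b a)
        = ∑ b ∈ G.neighborFinset a, (2 * avgQ G ψ a) := by
      refine Finset.sum_congr rfl fun b hb => ?_
      exact h1 a b (G.mem_neighborFinset a b |>.mp hb) haM
    have hga : g a = avgQ G ψ a := by simp [hg, haM]
    rw [hsum2] at hsum1
    rw [Finset.sum_const, Finset.sum_add_distrib, Finset.sum_const,
      G.card_neighborFinset_eq_degree, nsmul_eq_mul, nsmul_eq_mul, hga] at hsum1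
    rw [show g a = avgQ G ψ a from hga]
    linear_combination hsum1
  -- dart swap lemma
  have hswap : ∀ F : V → V → ℂ,
      ∑ a, ∑ b ∈ G.neighborFinset a, F a b = ∑ a, ∑ b ∈ G.neighborFinset a, F b a := by
    intro F
    have key : ∀ H : V → V → ℂ, ∑ a, ∑ b ∈ G.neighborFinset a, H a b
        = ∑ a, ∑ b, if G.Adj a b then H a b else 0 := by
      intro H
      refine Finset.sum_congr rfl fun a _ => ?_
      rw [SimpleGraph.neighborFinset_eq_filter, Finset.sum_filter]
    rw [key F, key (fun a b => F b a)]
    rw [Finset.sum_comm]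
    refine Finset.sum_congr rfl fun a _ => Finset.sum_congr rfl fun b _ => ?_
    simp only [G.adj_comm a b]
  -- energy argument
  have hT : ∑ a, ∑ b ∈ G.neighborFinset a, (starRingEnd ℂ) (g a) * (g a - g b) = 0 := by
    refine Finset.sum_eq_zero fun a _ => ?_
    by_cases haM : a ∈ M
    · simp [hgM a haM]
    · have : ∑ b ∈ G.neighborFinset a, (starRingEnd ℂ) (g a) * (g a - g b)
          = (starRingEnd ℂ) (g a) * ((G.degree a : ℂ) * g a - ∑ b ∈ G.neighborFinset a, g b) := by
        rw [← Finset.mul_sum, Finset.sum_sub_distrib, Finset.sum_const,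
          G.card_neighborFinset_eq_degree, nsmul_eq_mul]
      rw [this, hharm a haM]
      simp
  have hT' : ∑ a, ∑ b ∈ G.neighborFinset a, (starRingEnd ℂ) (g b) * (g b - g a) = 0 := by
    rw [← hswap (fun a b => (starRingEnd ℂ) (g a) * (g a - g b))]
    exact hT
  have hE : ∑ a, ∑ b ∈ G.neighborFinset a, Complex.normSq (g a - g b) = 0 := by
    have key : ∀ a b : V, ((Complex.normSq (g a - g b) : ℝ) : ℂ)
        = (starRingEnd ℂ) (g a) * (g a - g b) + (starRingEnd ℂ) (g b) * (g b - g a) := by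
      intro a b
      have h := Complex.mul_conj (g a - g b)
      rw [map_sub] at h
      linear_combination -h
    have hC : ∑ a, ∑ b ∈ G.neighborFinset a, ((Complex.normSq (g a - g b) : ℝ) : ℂ) = 0 := by
      calc ∑ a, ∑ b ∈ G.neighborFinset a, ((Complex.normSq (g a - g b) : ℝ) : ℂ)
          = ∑ a, ∑ b ∈ G.neighborFinset a,
            ((starRingEnd ℂ) (g a) * (g a - g b) + (starRingEnd ℂ) (g b) * (g b - g a)) := by
            exact Finset.sum_congr rfl fun a _ => Finset.sum_congr rfl fun b _ => key a b
        _ = (∑ a, ∑ b ∈ G.neighborFinset a, (starRingEnd ℂ) (g a) * (g a - g b))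
            + ∑ a, ∑ b ∈ G.neighborFinset a, (starRingEnd ℂ) (g b) * (g b - g a) := by
            rw [← Finset.sum_add_distrib]
            exact Finset.sum_congr rfl fun a _ => Finset.sum_add_distrib
        _ = 0 := by rw [hT, hT', add_zero]
    have : ((∑ a, ∑ b ∈ G.neighborFinset a, Complex.normSq (g a - g b) : ℝ) : ℂ) = 0 := by
      push_cast
      exact hC
    exact_mod_cast this
  -- each term of the nonnegative sum vanishes
  have hconstAdj : ∀ a b, G.Adj a b → g a = g b := by
    intro a b hab
    have h1' := (Finset.sum_eq_zero_iff_of_nonneg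
      (fun a _ => Finset.sum_nonneg fun b _ => Complex.normSq_nonneg _)).mp hE
      a (Finset.mem_univ a)
    have h2' := (Finset.sum_eq_zero_iff_of_nonneg
      (fun b _ => Complex.normSq_nonneg _)).mp h1' b ((G.mem_neighborFinset a b).mpr hab)
    have := Complex.normSq_eq_zero.mp h2'
    exact sub_eq_zero.mp this
  -- connectivity: g is constant, hence zero everywhere
  have hreach : ∀ x y : V, ∀ _ : G.Walk x y, g x = g y := by
    intro x y p
    induction p with
    | nil => rfl
    | cons hadj p ih => exact (hconstAdj _ _ hadj).trans ih
  obtain ⟨m, hm⟩ := hM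
  have hgzero : ∀ a, g a = 0 := fun a =>
    ((hconn a m).elim fun p => hreach _ _ p).trans (hgM m hm)
  intro a haM
  have havg : avgQ G ψ a = 0 := by
    have := hgzero a
    simpa [hg, haM] using this
  have : (G.degree a : ℂ) * ((G.degree a : ℂ)⁻¹ * ∑ b ∈ G.neighborFinset a, ψ a b) = 0 := by
    rw [← avgQ]
    simp [havg]
  rwa [← mul_assoc, mul_inv_cancel₀ (hdegC a), one_mul] at this
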